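/- arXiv:2209.10757 — 2 statements merged into one kernel-verified Lean document; each statement's English description precedes it below -/
import Mathlib

section
/- Let f : ℚ → ℤ be a nonzero graded map and suppose f(r) + f(-r) = 0 for some rational r > 0. Then there is a smallest positive rational k with f(k) + f(-k) = 0, and for every s ∈ ℚ, f(s) + f(-s) = 0 if and only if s ∈ kℤ = {ik : i ∈ ℤ}. -/
open scoped Pointwise

variable {K : Type*} [DivisionRing K]

/-- `V` is a total valuation ring of the division ring `K`. -/
def IsTVR (V : Subring K) : Prop := ∀ k : K, k ≠ 0 → k ∈ V ∨ k⁻¹ ∈ V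

/-- The additive group generated by the elementwise products of two subsets, as a set. -/
def aprod (S T : Set K) : Set K := (AddSubgroup.closure (S * T) : Set K)

/-- `O_l(S) = {a ∈ K : aS ⊆ S}`. -/
def Ol (S : Set K) : Set K := {a : K | ∀ x ∈ S, a * x ∈ S}

/-- `O_r(S) = {a ∈ K : Sa ⊆ S}`. -/
def Orr (S : Set K) : Set K := {a : K | ∀ x ∈ S, x * a ∈ S}

/-- `(J : I)_r = {a ∈ K : Ia ⊆ J}`. -/
def residR (J I : Set K) : Set K := {a : K | ∀ x ∈ I, x * a ∈ J}

/-- The Jacobson radical of a total valuation ring `W`, as a set: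
`{x ∈ W : x = 0 ∨ x⁻¹ ∉ W}`. -/
def jacS (W : Set K) : Set K := {x : K | x ∈ W ∧ (x = 0 ∨ x⁻¹ ∉ W)}

/-- `S⁻ = {c⁻¹ : 0 ≠ c ∈ S}`. -/
def invS (S : Set K) : Set K := {x : K | ∃ c ∈ S, c ≠ 0 ∧ x = c⁻¹}

/-- `S` is an additive subgroup of `K`. -/
def IsAddSubgrp (S : Set K) : Prop := (0 : K) ∈ S ∧ ∀ x ∈ S, ∀ y ∈ S, x - y ∈ S

/-- `*I = ⋂ {Wc : c ∈ K, I ⊆ Wc}` where `W = O_l(I)`. -/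
def lstar (I : Set K) : Set K := ⋂ c ∈ {c : K | I ⊆ Ol I * {c}}, Ol I * {c}

/-- A family `(A_r)` of additive subgroups of `K` is a graded extension of `V0`
with support the additive subgroup `H ⊆ ℚ`. -/
def IsGradedExtOn (H : Set ℚ) (V0 : Set K) (σ : ℚ → (K ≃+* K)) (A : ℚ → Set K) : Prop :=
  (∀ r ∈ H, IsAddSubgrp (A r)) ∧ A 0 = V0 ∧
  (∀ r ∈ H, A r ∪ (σ r '' invS (A (-r))) = Set.univ) ∧
  (∀ r ∈ H, ∀ s ∈ H, aprod (A r) (σ r '' A s) ⊆ A (r + s))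

/-- `ℤr = {ir : i ∈ ℤ}` as a subset of `ℚ`. -/
def zmulSet (r : ℚ) : Set ℚ := {s : ℚ | ∃ i : ℤ, s = (i : ℚ) * r}

/-- Graded extension of `V0` in `K[ℚ,σ]`. -/
def IsGradedExtQ (V0 : Set K) (σ : ℚ → (K ≃+* K)) (A : ℚ → Set K) : Prop :=
  IsGradedExtOn Set.univ V0 σ A

/-- `H_r` is a graded extension of `V0` in `K[X^r, X^{-r}; σ(r)]`. -/
def IsGradedExtHr (V0 : Set K) (σ : ℚ → (K ≃+* K)) (A : ℚ → Set K) (r : ℚ) : Prop :=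
  IsGradedExtOn (zmulSet r) V0 σ A

/-- `H_r` is of Type (I). -/
def HrTypeI (σ : ℚ → (K ≃+* K)) (A : ℚ → Set K) (r : ℚ) : Prop :=
  ∀ i j : ℤ, 0 < i → 0 < j →
    aprod (A ((i : ℚ) * r)) (σ ((i : ℚ) * r) '' A ((j : ℚ) * r)) = A (((i + j : ℤ) : ℚ) * r) ∧
    aprod (A (-((i : ℚ) * r))) (σ (-((i : ℚ) * r)) '' A (-((j : ℚ) * r)))
      = A (-(((i + j : ℤ) : ℚ) * r))

/-- The whole family `(A_r)_{r ∈ ℚ}` is of Type (I). -/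
def FamTypeI (σ : ℚ → (K ≃+* K)) (A : ℚ → Set K) : Prop :=
  ∀ g h : ℚ, 0 < g → 0 < h →
    aprod (A g) (σ g '' A h) = A (g + h) ∧
    aprod (A (-g)) (σ (-g) '' A (-h)) = A (-g - h)

/-- `M_0 = V`, `M_{ir} = A_r A_r^{σ(r)} ⋯ A_r^{σ((i-1)r)}`. -/
def Mir (V0 : Set K) (σ : ℚ → (K ≃+* K)) (A : ℚ → Set K) (r : ℚ) : ℕ → Set K
  | 0 => V0
  | 1 => A r
  | n + 2 => aprod (Mir V0 σ A r (n + 1)) (σ (((n + 1 : ℕ) : ℚ) * r) '' A r)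

/-- `H_r` is of Type (a). -/
def HrTypeA (V0 : Set K) (σ : ℚ → (K ≃+* K)) (A : ℚ → Set K) (r : ℚ) : Prop :=
  ∃ a : K, A r = V0 * {a} ∧ A r = {a} * (σ r '' V0) ∧ A (-r) = V0 * {σ (-r) a⁻¹}

/-- `H_r` is of Type (b). -/
def HrTypeB (σ : ℚ → (K ≃+* K)) (A : ℚ → Set K) (r : ℚ) : Prop :=
  ∃ a : K, A r = Ol (A r) * {a} ∧ {a} * (σ r '' Ol (A r)) ⊂ A r

/-- `H_r` is of Type (c). -/
def HrTypeC (σ : ℚ → (K ≃+* K)) (A : ℚ → Set K) (r : ℚ) : Prop :=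
  ∃ a : K, A r = Ol (A r) * {a} ∧ A r ⊂ {a} * (σ r '' Ol (A r))

/-- `H_r` is of Type (d). -/
def HrTypeD (σ : ℚ → (K ≃+* K)) (A : ℚ → Set K) (r : ℚ) : Prop :=
  ∃ a : K, A r = Ol (A r) * {a} ∧ A r = {a} * (σ r '' Ol (A r)) ∧
    A (-r) = jacS (Ol (A r)) * {σ (-r) a⁻¹} ∧
    aprod (jacS (Ol (A r))) (jacS (Ol (A r))) = jacS (Ol (A r))

/-- `H_r` is of Type (e). -/
def HrTypeE (σ : ℚ → (K ≃+* K)) (A : ℚ → Set K) (r : ℚ) : Prop :=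
  ∃ a b : K, A r = Ol (A r) * {a} ∧ A r = {a} * (σ r '' Ol (A r)) ∧
    A (-r) = jacS (Ol (A r)) * {σ (-r) a⁻¹} ∧
    jacS (Ol (A r)) = Ol (A r) * {b⁻¹}

/-- `H_r` is of Type (f). -/
def HrTypeF (A : ℚ → Set K) (r : ℚ) : Prop := A r ⊂ lstar (A r)

/-- `H_r` is of Type (g). -/
def HrTypeG (V0 : Set K) (σ : ℚ → (K ≃+* K)) (A : ℚ → Set K) (r : ℚ) : Prop :=
  lstar (A r) = A r ∧
    ∀ i : ℕ, 0 < i → ¬ ∃ c : K, lstar (Mir V0 σ A r i) = Ol (A r) * {c}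

/-- `H_r` is of Type (h). -/
def HrTypeH (V0 : Set K) (σ : ℚ → (K ≃+* K)) (A : ℚ → Set K) (r : ℚ) : Prop :=
  lstar (A r) = A r ∧
    ∃ i : ℕ, 0 < i ∧ ∃ c : K, lstar (Mir V0 σ A r i) = Ol (A r) * {c}

/-- A graded map `f : ℚ → ℤ`. -/
def IsGradedMap (f : ℚ → ℤ) : Prop :=
  f 0 = 0 ∧ (∀ s t : ℚ, f s + f t ≤ f (s + t)) ∧ (∀ s : ℚ, -1 ≤ f s + f (-s))

/-!
The rationals `s` with `f s + f (-s) = 0` form a subgroup `H` of `ℚ`, and `f` restricts to an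
additive map `H → ℤ`. This map is not zero: if `f` vanished on `H ∋ r ≠ 0`, then for any `s` some
`n s` (`n ≥ 1`) lies in `H`, so `f` is invariant under translation by `n s` and superadditivity
gives `f (-s) = f ((n - 1) s) ≥ (n - 1) f s`, which forces `f = 0`. An additive map from a subgroup
of `ℚ` to `ℤ` is multiplication by a rational constant, nonzero here, so `H` lies in a cyclic
group `ℤ c`; it is therefore generated by its least positive element.
-/

theorem AddSubgroup.exists_nat_pos_mul_mem_of_ne_zero {H : AddSubgroup ℚ} {r : ℚ} (hr : r ∈ H)
    (hr0 : r ≠ 0) (s : ℚ) : ∃ n : ℕ, 0 < n ∧ (n : ℚ) * s ∈ H := by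
  refine ⟨(s / r).den, (s / r).pos, ?_⟩
  have hmul : ((s / r).den : ℚ) * s = (s / r).num • r := by
    rw [zsmul_eq_mul, ← Rat.den_mul_eq_num, mul_assoc, div_mul_cancel₀ s hr0]
  rw [hmul]
  exact H.zsmul_mem hr _

theorem AddSubgroup.mul_map_eq_mul_map {H : AddSubgroup ℚ} (φ : H →+ ℤ) (a b : H) :
    (b : ℚ) * φ a = a * φ b := by
  set A : ℚ := ((a : ℚ).den : ℚ)
  set B : ℚ := ((b : ℚ).den : ℚ)
  -- both sides equal `a.num * b.num`
  have hsmul : ((b : ℚ).num * (a : ℚ).den) • a = ((a : ℚ).num * (b : ℚ).den) • b := by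
    apply Subtype.ext
    simp only [AddSubgroup.coe_zsmul, zsmul_eq_mul, Int.cast_mul, Int.cast_natCast,
      ← Rat.mul_den_eq_num]
    ring
  have hφ : ((b : ℚ) * B) * A * φ a = ((a : ℚ) * A) * B * φ b := by
    have h := congrArg (fun x : ℤ => (x : ℚ)) (congrArg φ hsmul)
    simpa only [map_zsmul, smul_eq_mul, Int.cast_mul, Int.cast_natCast,
      ← Rat.mul_den_eq_num] using h
  have hAB : A * B ≠ 0 := by positivity
  apply mul_right_cancel₀ hAB
  linear_combination hφ

theorem AddSubgroup.disjoint_Ioo_abs_of_le_zmultiples {R : Type*} [Ring R] [LinearOrder R]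
    [IsStrictOrderedRing R] {H : AddSubgroup R} {c : R} (hH : H ≤ AddSubgroup.zmultiples c) :
    Disjoint (H : Set R) (Set.Ioo 0 |c|) := by
  refine Set.disjoint_left.2 fun x hx hxI => ?_
  obtain ⟨m, rfl⟩ := AddSubgroup.mem_zmultiples_iff.1 (hH hx)
  obtain ⟨hpos, hlt⟩ := hxI
  have hm : m ≠ 0 := by rintro rfl; simp at hpos
  have hm1 : (1 : R) ≤ |(m : R)| := by exact_mod_cast Int.one_le_abs hm
  have hle : |c| ≤ |m • c| := by
    rw [zsmul_eq_mul, abs_mul]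
    exact le_mul_of_one_le_left (abs_nonneg c) hm1
  rw [abs_of_pos hpos] at hle
  exact hle.not_gt hlt

namespace IsGradedMap

variable {f : ℚ → ℤ}

theorem add_neg_nonpos (hf : IsGradedMap f) (s : ℚ) : f s + f (-s) ≤ 0 := by
  simpa [hf.1] using hf.2.1 s (-s)

theorem balanced_add (hf : IsGradedMap f) {a b : ℚ} (ha : f a + f (-a) = 0)
    (hb : f b + f (-b) = 0) :
    f (a + b) + f (-(a + b)) = 0 ∧ f (a + b) = f a + f b := by
  have hab := hf.2.1 a b
  have hab' := hf.2.1 (-a) (-b)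
  rw [← neg_add] at hab'
  have := hf.add_neg_nonpos (a + b)
  omega

def balancedSubgroup (hf : IsGradedMap f) : AddSubgroup ℚ where
  carrier := {s | f s + f (-s) = 0}
  zero_mem' := by simp [hf.1]
  add_mem' ha hb := (hf.balanced_add ha hb).1
  neg_mem' {s} hs := by simpa [add_comm] using hs

theorem mem_balancedSubgroup (hf : IsGradedMap f) {s : ℚ} :
    s ∈ hf.balancedSubgroup ↔ f s + f (-s) = 0 :=
  Iff.rfl

def balancedHom (hf : IsGradedMap f) : hf.balancedSubgroup →+ ℤ where
  toFun g := f g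
  map_zero' := hf.1
  map_add' a b := (hf.balanced_add a.2 b.2).2

theorem natCast_mul_le (hf : IsGradedMap f) (s : ℚ) (n : ℕ) : (n : ℤ) * f s ≤ f (n * s) := by
  induction n with
  | zero => simp [hf.1]
  | succ n ih =>
    have h := hf.2.1 (n * s) s
    push_cast
    rw [add_mul, one_mul, add_mul, one_mul]
    omega

theorem apply_add_of_apply_eq_zero (hf : IsGradedMap f) {g : ℚ} (hg : f g = 0)
    (hg' : f (-g) = 0) (x : ℚ) : f (x + g) = f x := by
  have h1 := hf.2.1 x g
  have h2 := hf.2.1 (x + g) (-g)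
  rw [add_neg_cancel_right] at h2
  omega

theorem apply_neg_nonneg_of_nonneg (hf : IsGradedMap f) {r : ℚ} (hr : r ∈ hf.balancedSubgroup)
    (hr0 : r ≠ 0) (hzero : ∀ g ∈ hf.balancedSubgroup, f g = 0) {s : ℚ} (hs : 0 ≤ f s) :
    0 ≤ f (-s) := by
  obtain ⟨n, hn, hns⟩ := AddSubgroup.exists_nat_pos_mul_mem_of_ne_zero hr hr0 s
  have hneg : f (-(n * s)) = 0 := by
    simpa [hzero _ hns] using hf.mem_balancedSubgroup.1 hns
  have htrans := hf.apply_add_of_apply_eq_zero (hzero _ hns) hneg (-s)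
  have hmul : -s + n * s = ((n - 1 : ℕ) : ℚ) * s := by
    rw [Nat.cast_sub hn, Nat.cast_one]
    ring
  rw [hmul] at htrans
  have := hf.natCast_mul_le s (n - 1)
  rw [htrans] at this
  exact le_trans (mul_nonneg (by positivity) hs) this

theorem exists_balanced_apply_ne_zero (hf : IsGradedMap f) (hne : ∃ s, f s ≠ 0) {r : ℚ}
    (hr : r ∈ hf.balancedSubgroup) (hr0 : r ≠ 0) : ∃ g ∈ hf.balancedSubgroup, f g ≠ 0 := by
  by_contra! hzero
  obtain ⟨s, hs⟩ := hne
  have key : ∀ t, 0 ≤ f t → 0 ≤ f (-t) := fun _ => hf.apply_neg_nonneg_of_nonneg hr hr0 hzero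
  have h1 := hf.2.2 s
  have h2 := hf.add_neg_nonpos s
  rcases le_or_gt 0 (f s) with hpos | hneg
  · have := key _ hpos
    omega
  · have := key (-s) (by omega)
    rw [neg_neg] at this
    omega

theorem balancedSubgroup_le_zmultiples (hf : IsGradedMap f) {g₀ : ℚ}
    (hg₀ : g₀ ∈ hf.balancedSubgroup) (hfg₀ : f g₀ ≠ 0) :
    hf.balancedSubgroup ≤ AddSubgroup.zmultiples (g₀ / f g₀) := by
  intro g hg
  have h := AddSubgroup.mul_map_eq_mul_map hf.balancedHom ⟨g, hg⟩ ⟨g₀, hg₀⟩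
  refine AddSubgroup.mem_zmultiples_iff.2 ⟨f g, ?_⟩
  change g₀ * (f g : ℚ) = g * f g₀ at h
  have : (f g₀ : ℚ) ≠ 0 := by exact_mod_cast hfg₀
  rw [zsmul_eq_mul]
  field_simp
  linear_combination h

end IsGradedMap

/-- If `f` is a nonzero graded map with `f(r) + f(-r) = 0` for some rational `r > 0`, then
there is a smallest positive rational `k` with `f(k) + f(-k) = 0`, and `f(s) + f(-s) = 0`
iff `s ∈ kℤ`. -/
theorem stmt14 (f : ℚ → ℤ) (hf : IsGradedMap f) (hne : ∃ s : ℚ, f s ≠ 0)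
    (r : ℚ) (hr : 0 < r) (h0 : f r + f (-r) = 0) :
    ∃ k : ℚ, 0 < k ∧ f k + f (-k) = 0 ∧
      (∀ k' : ℚ, 0 < k' → f k' + f (-k') = 0 → k ≤ k') ∧
      (∀ s : ℚ, f s + f (-s) = 0 ↔ ∃ i : ℤ, s = (i : ℚ) * k) := by
  have hr' : r ∈ hf.balancedSubgroup := h0
  obtain ⟨g₀, hg₀, hfg₀⟩ := hf.exists_balanced_apply_ne_zero hne hr' hr.ne'
  have hc : 0 < |g₀ / f g₀| := by
    have hg₀0 : g₀ ≠ 0 := by rintro rfl; exact hfg₀ hf.1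
    have : (f g₀ : ℚ) ≠ 0 := by exact_mod_cast hfg₀
    positivity
  have hbot : hf.balancedSubgroup ≠ ⊥ := (AddSubgroup.ne_bot_iff_exists_ne_zero).2 ⟨⟨r, hr'⟩, by
    simpa using hr.ne'⟩
  obtain ⟨k, hk⟩ := AddSubgroup.exists_isLeast_pos hbot hc
    (AddSubgroup.disjoint_Ioo_abs_of_le_zmultiples (hf.balancedSubgroup_le_zmultiples hg₀ hfg₀))
  have hcyc := AddSubgroup.cyclic_of_min hk
  refine ⟨k, hk.1.2, hk.1.1, fun k' hk' hbal => hk.2 ⟨hbal, hk'⟩, fun s => ?_⟩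
  rw [← hf.mem_balancedSubgroup, hcyc, AddSubgroup.mem_closure_singleton]
  simp only [zsmul_eq_mul, eq_comm]
end

section
/- Let W be a total valuation ring of K with V ⊊ W and J(W)² = J(W). Let I be a nonzero left V-ideal of K with O_l(I) ⊊ W. Then WI is a principal left W-ideal, i.e. WI = Wc for some c ∈ K. -/
open scoped Pointwise

variable {K : Type*} [DivisionRing K]

/-!
Choose `w ∈ W \ O_l(I)`, so that `c := w x ∉ I` for some `x ∈ I`. For `0 ≠ y ∈ I` the
alternative `c y⁻¹ ∈ V` of totality would give `c ∈ VI ⊆ I`; hence `y c⁻¹ ∈ V`, i.e.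
`I ⊆ Vc ⊆ Wc`, and so `WI ⊆ Wc`. Conversely `c = w x ∈ WI`.
-/

theorem subset_mul_singleton_of_notMem {V : Subring K} (hV : IsTVR V) {I : Set K}
    (hVI : (V : Set K) * I ⊆ I) {c : K} (hc : c ∉ I) : I ⊆ (V : Set K) * {c} := by
  intro y hy
  by_cases hy0 : y = 0
  · exact ⟨0, V.zero_mem, c, rfl, by simp [hy0]⟩
  have hc0 : c ≠ 0 := by
    rintro rfl
    exact hc (by simpa using hVI (Set.mul_mem_mul V.zero_mem hy))
  rcases hV (c * y⁻¹) (mul_ne_zero hc0 (inv_ne_zero hy0)) with h | h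
  · exact absurd (by simpa [hy0] using hVI (Set.mul_mem_mul h hy)) hc
  · exact ⟨y * c⁻¹, by simpa using h, c, rfl, by simp [hc0]⟩

theorem aprod_subset_mul_singleton {W : Subring K} {S : Set K} {c : K}
    (hS : S ⊆ (W : Set K) * {c}) : aprod (W : Set K) S ⊆ (W : Set K) * {c} := by
  have hWc : (W : Set K) * {c} = (W.toAddSubgroup.map (AddMonoidHom.mulRight c) : Set K) := by
    rw [Set.mul_singleton]; rfl
  rw [hWc, aprod, SetLike.coe_subset_coe, AddSubgroup.closure_le]
  rintro _ ⟨u, hu, y, hy, rfl⟩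
  obtain ⟨v, hv, _, rfl, rfl⟩ := hS hy
  exact ⟨u * v, W.mul_mem hu hv, by simp [mul_assoc]⟩

theorem mul_singleton_subset_aprod {W : Subring K} {I : Set K} {w x : K} (hw : w ∈ W)
    (hx : x ∈ I) : (W : Set K) * {w * x} ⊆ aprod (W : Set K) I := by
  rintro _ ⟨u, hu, _, rfl, rfl⟩
  show u * (w * x) ∈ aprod (W : Set K) I
  rw [← mul_assoc]
  exact AddSubgroup.subset_closure (Set.mul_mem_mul (W.mul_mem hu hw) hx)

theorem stmt15_general (V W : Subring K) (hV : IsTVR V)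
    (hVW : (V : Set K) ⊂ (W : Set K))
    (I : Set K) (hVI : (V : Set K) * I ⊆ I)
    (hOl : Ol I ⊂ (W : Set K)) :
    ∃ c : K, aprod (W : Set K) I = (W : Set K) * {c} := by
  obtain ⟨w, hwW, hwI⟩ := Set.exists_of_ssubset hOl
  obtain ⟨x, hxI, hwx⟩ : ∃ x ∈ I, w * x ∉ I := by simpa [Ol] using hwI
  refine ⟨w * x, (aprod_subset_mul_singleton ?_).antisymm (mul_singleton_subset_aprod hwW hxI)⟩
  exact (subset_mul_singleton_of_notMem hV hVI hwx).trans (Set.mul_subset_mul_right hVW.subset)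

/-- If `W` is a total valuation ring with `V ⊊ W`, `J(W)² = J(W)`, and `I` is a nonzero left
`V`-ideal with `O_l(I) ⊊ W`, then `WI` is a principal left `W`-ideal. -/
theorem stmt15 (V W : Subring K) (hV : IsTVR V) (hVK : (V : Set K) ≠ Set.univ)
    (hW : IsTVR W) (hVW : (V : Set K) ⊂ (W : Set K))
    (hJ : aprod (jacS (W : Set K)) (jacS (W : Set K)) = jacS (W : Set K))
    (I : Set K) (hI : IsAddSubgrp I) (hI0 : I ≠ {0}) (hVI : (V : Set K) * I ⊆ I)
    (hOl : Ol I ⊂ (W : Set K)) :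
    ∃ c : K, aprod (W : Set K) I = (W : Set K) * {c} :=
  stmt15_general V W hV hVW I hVI hOl
end
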